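/- Let G and H be graphs and let v ∈ V(H) be a strong support vertex of H, that is, v is adjacent to at least two leaves of H. Then γ_I(G∘_v H) = n(G)·γ_I(H). Furthermore, if G is a graph of maximum degree at least 2, H is a graph, and v ∈ V(H) is such that every γ_I(H)-function g satisfies g(v) ≠ 1, then also γ_I(G∘_v H) = n(G)·γ_I(H). -/

import Mathlib

open Finset

open scoped Classical

/-- An Italian dominating function on a finite simple graph: values in {0,1,2} and
every vertex with value 0 has neighbour values summing to at least 2. -/
noncomputable def IsIDF {α : Type*} [Fintype α] (G : SimpleGraph α) (f : α → ℕ) : Prop :=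
  (∀ u, f u ≤ 2) ∧
    ∀ u, f u = 0 → 2 ≤ ∑ w ∈ Finset.univ.filter (fun w => G.Adj u w), f w

/-- The Italian domination number γ_I(G). -/
noncomputable def italianNumber {α : Type*} [Fintype α] (G : SimpleGraph α) : ℕ :=
  sInf {n | ∃ f : α → ℕ, IsIDF G f ∧ ∑ u, f u = n}

/-- A γ_I(G)-function: an IDF on G of minimum weight. -/
noncomputable def IsMinIDF {α : Type*} [Fintype α] (G : SimpleGraph α) (f : α → ℕ) : Prop :=
  IsIDF G f ∧ ∑ u, f u = italianNumber G

/-- D is a dominating set of G. -/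
def IsDomSet {α : Type*} (G : SimpleGraph α) (D : Set α) : Prop :=
  ∀ u ∉ D, ∃ w ∈ D, G.Adj u w

/-- The domination number γ(G). -/
noncomputable def dominationNumber {α : Type*} [Fintype α] (G : SimpleGraph α) : ℕ :=
  sInf {n | ∃ D : Finset α, IsDomSet G ↑D ∧ D.card = n}

/-- The degree of a vertex. -/
noncomputable def deg {α : Type*} [Fintype α] (G : SimpleGraph α) (u : α) : ℕ :=
  (Finset.univ.filter (fun w => G.Adj u w)).card

/-- The rooted product G∘_v H: one copy of H for each vertex of G, the root v of the
x-th copy being identified with the vertex x of G. The pair (x, y) is the vertex y of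
the x-th copy of H; in particular (x, v) is the vertex x of G. -/
def rootedProd {α β : Type*} (G : SimpleGraph α) (H : SimpleGraph β) (v : β) :
    SimpleGraph (α × β) where
  Adj p q := (p.1 = q.1 ∧ H.Adj p.2 q.2) ∨ (p.2 = v ∧ q.2 = v ∧ G.Adj p.1 q.1)
  symm := by
    constructor
    rintro ⟨x, y⟩ ⟨x', y'⟩ (⟨h1, h2⟩ | ⟨h1, h2, h3⟩)
    · exact Or.inl ⟨h1.symm, h2.symm⟩
    · exact Or.inr ⟨h2, h1, h3.symm⟩
  loopless := by
    constructor
    rintro ⟨x, y⟩ (⟨_, h⟩ | ⟨_, _, h⟩)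
    · exact H.loopless.irrefl _ h
    · exact G.loopless.irrefl _ h

/-- The weight ω(f_x) of the restriction of f to the copy H_x. -/
def copyWeight {α β : Type*} [Fintype β] (f : α × β → ℕ) (x : α) : ℕ :=
  ∑ y, f (x, y)

/-- The graph H − {v} obtained from H by deleting the vertex v. -/
def deleteVertex {β : Type*} (H : SimpleGraph β) (v : β) : SimpleGraph {w : β // w ≠ v} :=
  SimpleGraph.induce {w : β | w ≠ v} H

/-!
Any γ_I(H)-function, copied into every H_x, is an IDF of G∘_v H, so γ_I(G∘_v H) ≤ n(G)·γ_I(H).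
Conversely, an IDF f of G∘_v H restricts on each copy H_x to a function satisfying the Italian
condition at every vertex other than the root (x, v), since only the root has neighbours outside
H_x. If v carries two leaves, both leaves of H_x are positive whenever f(x, v) = 0, so the
restriction is an IDF of H. Otherwise, raising f(x, v) from 0 to 1 gives an IDF of H of weight
ω(f_x) + 1 with value 1 at v, which cannot be a γ_I(H)-function; either way ω(f_x) ≥ γ_I(H).
-/

section ItalianNumber

variable {α : Type*} [Fintype α] (G : SimpleGraph α)

lemma exists_isMinIDF : ∃ f : α → ℕ, IsMinIDF G f :=
  Nat.sInf_mem (s := {n | ∃ f : α → ℕ, IsIDF G f ∧ ∑ u, f u = n})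
    ⟨_, fun _ => 2, ⟨fun _ => le_rfl, fun _ h => by simp at h⟩, rfl⟩

variable {G}

lemma IsIDF.italianNumber_le {f : α → ℕ} (hf : IsIDF G f) : italianNumber G ≤ ∑ u, f u :=
  Nat.sInf_le ⟨f, hf, rfl⟩

lemma filter_adj_eq_singleton_of_deg_eq_one {l v : α} (hlv : G.Adj l v) (hl : deg G l = 1) :
    univ.filter (G.Adj l ·) = {v} :=
  (eq_of_subset_of_card_le (by simpa using hlv) (card_singleton v ▸ hl.le)).symm

end ItalianNumber

section RootedProduct

variable {α β : Type*} [Fintype α] [Fintype β] {G : SimpleGraph α} {H : SimpleGraph β} {v : β}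

lemma image_filter_adj_subset_filter_rootedProd_adj (x : α) (y : β) :
    (univ.filter (H.Adj y ·)).image (x, ·) ⊆ univ.filter ((rootedProd G H v).Adj (x, y) ·) := by
  intro p hp
  simp only [mem_image, mem_filter, mem_univ, true_and] at hp ⊢
  obtain ⟨w, hw, rfl⟩ := hp
  exact Or.inl ⟨rfl, hw⟩

lemma filter_rootedProd_adj_of_ne (x : α) {y : β} (hy : y ≠ v) :
    univ.filter ((rootedProd G H v).Adj (x, y) ·) = (univ.filter (H.Adj y ·)).image (x, ·) := by
  refine (Subset.antisymm (image_filter_adj_subset_filter_rootedProd_adj x y) ?_).symm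
  rintro ⟨x', w⟩ hp
  simp only [mem_filter, mem_univ, true_and, mem_image] at hp ⊢
  rcases hp with ⟨rfl, hyw⟩ | ⟨rfl, -⟩
  · exact ⟨w, hyw, rfl⟩
  · exact absurd rfl hy

lemma sum_adj_le_sum_rootedProd_adj (f : α × β → ℕ) (x : α) (y : β) :
    ∑ w ∈ univ.filter (H.Adj y ·), f (x, w)
      ≤ ∑ p ∈ univ.filter ((rootedProd G H v).Adj (x, y) ·), f p := by
  rw [← sum_image (Prod.mk_right_injective x).injOn]
  exact sum_le_sum_of_subset (image_filter_adj_subset_filter_rootedProd_adj x y)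

lemma sum_rootedProd_adj_of_ne (f : α × β → ℕ) (x : α) {y : β} (hy : y ≠ v) :
    ∑ p ∈ univ.filter ((rootedProd G H v).Adj (x, y) ·), f p
      = ∑ w ∈ univ.filter (H.Adj y ·), f (x, w) := by
  rw [filter_rootedProd_adj_of_ne x hy, sum_image (Prod.mk_right_injective x).injOn]

lemma sum_eq_sum_copyWeight (f : α × β → ℕ) : ∑ p, f p = ∑ x, copyWeight f x :=
  Fintype.sum_prod_type f

lemma IsIDF.comp_snd {g : β → ℕ} (hg : IsIDF H g) : IsIDF (rootedProd G H v) (g ·.2) := by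
  refine ⟨fun p => hg.1 p.2, ?_⟩
  rintro ⟨x, y⟩ h0
  exact (hg.2 y h0).trans (sum_adj_le_sum_rootedProd_adj (g ·.2) x y)

lemma italianNumber_rootedProd_le :
    italianNumber (rootedProd G H v) ≤ Fintype.card α * italianNumber H := by
  obtain ⟨g, hg, hgw⟩ := exists_isMinIDF H
  calc italianNumber (rootedProd G H v) ≤ ∑ p : α × β, g p.2 := hg.comp_snd.italianNumber_le
    _ = Fintype.card α * italianNumber H := by
      simp [sum_eq_sum_copyWeight, copyWeight, ← hgw]

lemma card_mul_italianNumber_le_rootedProd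
    (hcopy : ∀ f, IsIDF (rootedProd G H v) f → ∀ x, italianNumber H ≤ copyWeight f x) :
    Fintype.card α * italianNumber H ≤ italianNumber (rootedProd G H v) := by
  obtain ⟨f, hf, hfw⟩ := exists_isMinIDF (rootedProd G H v)
  calc Fintype.card α * italianNumber H = ∑ _x : α, italianNumber H := by simp
    _ ≤ ∑ x, copyWeight f x := sum_le_sum fun x _ => hcopy f hf x
    _ = italianNumber (rootedProd G H v) := by rw [← sum_eq_sum_copyWeight, hfw]

variable {f : α × β → ℕ}

lemma IsIDF.two_le_sum_copy (hf : IsIDF (rootedProd G H v) f) {x : α} {y : β} (hy : y ≠ v)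
    (h0 : f (x, y) = 0) : 2 ≤ ∑ w ∈ univ.filter (H.Adj y ·), f (x, w) :=
  sum_rootedProd_adj_of_ne f x hy ▸ hf.2 (x, y) h0

lemma IsIDF.isIDF_of_copy_le (hf : IsIDF (rootedProd G H v) f) {x : α} {g : β → ℕ}
    (hg : ∀ y, g y ≤ 2) (hgv : g v ≠ 0) (hfg : ∀ y, f (x, y) ≤ g y) : IsIDF H g := by
  refine ⟨hg, fun y hy0 => ?_⟩
  have hyv : y ≠ v := by rintro rfl; exact hgv hy0
  calc 2 ≤ ∑ w ∈ univ.filter (H.Adj y ·), f (x, w) :=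
        hf.two_le_sum_copy hyv (Nat.eq_zero_of_le_zero (hy0 ▸ hfg y))
    _ ≤ ∑ w ∈ univ.filter (H.Adj y ·), g w := sum_le_sum fun w _ => hfg w

lemma IsIDF.ne_zero_of_leaf (hf : IsIDF (rootedProd G H v) f) {x : α} {l : β}
    (hvl : H.Adj v l) (hl : deg H l = 1) (h0 : f (x, v) = 0) : f (x, l) ≠ 0 := by
  intro hl0
  have h := hf.two_le_sum_copy hvl.ne.symm hl0
  rw [filter_adj_eq_singleton_of_deg_eq_one hvl.symm hl] at h
  simp [h0] at h

lemma IsIDF.copy_of_strong_support (hf : IsIDF (rootedProd G H v) f) (x : α) {l₁ l₂ : β}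
    (hne : l₁ ≠ l₂) (hl₁ : H.Adj v l₁) (hl₂ : H.Adj v l₂) (hd₁ : deg H l₁ = 1)
    (hd₂ : deg H l₂ = 1) : IsIDF H (fun y => f (x, y)) := by
  refine ⟨fun y => hf.1 (x, y), fun y h0 => ?_⟩
  by_cases hyv : y = v
  · subst hyv
    have h₁ := hf.ne_zero_of_leaf hl₁ hd₁ h0
    have h₂ := hf.ne_zero_of_leaf hl₂ hd₂ h0
    have hsub : ({l₁, l₂} : Finset β) ⊆ univ.filter (H.Adj y ·) := by
      simp [insert_subset_iff, hl₁, hl₂]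
    calc 2 ≤ f (x, l₁) + f (x, l₂) := by omega
      _ = ∑ w ∈ {l₁, l₂}, f (x, w) := (sum_pair (f := fun w => f (x, w)) hne).symm
      _ ≤ _ := sum_le_sum_of_subset hsub
  · exact hf.two_le_sum_copy hyv h0

lemma IsIDF.italianNumber_le_copyWeight (hf : IsIDF (rootedProd G H v) f) (x : α)
    (hmin : ∀ g : β → ℕ, IsMinIDF H g → g v ≠ 1) : italianNumber H ≤ copyWeight f x := by
  by_cases h0 : f (x, v) = 0
  · set g := Function.update (fun y => f (x, y)) v 1
    have hgv : g v = 1 := Function.update_self ..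
    have hg : IsIDF H g := by
      refine hf.isIDF_of_copy_le (x := x) (fun y => ?_) (by omega) (fun y => ?_) <;>
        by_cases hy : y = v <;> simp [g, hy, h0, hf.1 (x, y)]
    have hgw : ∑ y, g y = copyWeight f x + 1 := by
      rw [sum_update_of_mem (mem_univ v), copyWeight,
        sum_eq_add_sum_sdiff_singleton_of_mem (mem_univ v), h0, zero_add, add_comm]
    have hlt : italianNumber H ≠ ∑ y, g y := fun h => hmin g ⟨hg, h.symm⟩ hgv
    have := hg.italianNumber_le
    omega
  · exact hf.isIDF_of_copy_le (fun y => hf.1 (x, y)) h0 (fun _ => le_rfl) |>.italianNumber_le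

end RootedProduct

theorem stmt19_general {α β : Type*} [Fintype α] [Fintype β]
    (G : SimpleGraph α) (H : SimpleGraph β) (v : β) :
    ((∃ l₁ l₂ : β, l₁ ≠ l₂ ∧ H.Adj v l₁ ∧ H.Adj v l₂ ∧ deg H l₁ = 1 ∧ deg H l₂ = 1) →
      italianNumber (rootedProd G H v) = Fintype.card α * italianNumber H) ∧
    ((∃ u : α, 2 ≤ deg G u) → (∀ g : β → ℕ, IsMinIDF H g → g v ≠ 1) →
      italianNumber (rootedProd G H v) = Fintype.card α * italianNumber H) := by
  refine ⟨fun ⟨l₁, l₂, hne, hl₁, hl₂, hd₁, hd₂⟩ => ?_, fun _ hmin => ?_⟩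
  · refine italianNumber_rootedProd_le.antisymm (card_mul_italianNumber_le_rootedProd ?_)
    exact fun f hf x => (hf.copy_of_strong_support x hne hl₁ hl₂ hd₁ hd₂).italianNumber_le
  · refine italianNumber_rootedProd_le.antisymm (card_mul_italianNumber_le_rootedProd ?_)
    exact fun f hf x => hf.italianNumber_le_copyWeight x hmin

/-- Theorems: if v is a strong support vertex of H (adjacent to at
least two leaves of H), then γ_I(G∘_v H) = n(G)γ_I(H); furthermore, if G has maximum
degree at least 2 and every γ_I(H)-function g satisfies g(v) ≠ 1, then also
γ_I(G∘_v H) = n(G)γ_I(H). -/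
theorem stmt19 {α β : Type*} [Fintype α] [Nonempty α] [Fintype β]
    (G : SimpleGraph α) (H : SimpleGraph β) (v : β) :
    ((∃ l₁ l₂ : β, l₁ ≠ l₂ ∧ H.Adj v l₁ ∧ H.Adj v l₂ ∧ deg H l₁ = 1 ∧ deg H l₂ = 1) →
      italianNumber (rootedProd G H v) = Fintype.card α * italianNumber H) ∧
    ((∃ u : α, 2 ≤ deg G u) → (∀ g : β → ℕ, IsMinIDF H g → g v ≠ 1) →
      italianNumber (rootedProd G H v) = Fintype.card α * italianNumber H) :=
  stmt19_general G H v
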